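/- For gradient descent with nonincreasing positive step sizes η_t, the average gradient satisfies ‖(1/T)∑_{t=1}^T g_t(θ_t)‖₂ ≤ (2/(η_T T)) · max_{t ≤ T+1} ‖θ_t‖₂. -/
import Mathlib


open Finset

/-- Gradient descent with nonincreasing positive step sizes: the average gradient norm
is at most `(2/(η_T T)) · max_{t ≤ T+1} ‖θ_t‖`. -/
theorem gd_avg_grad_bound_nonincreasing_steps {d : ℕ}
    (η : ℕ → ℝ) (hη : ∀ t, 1 ≤ t → 0 < η t)
    (hη_anti : ∀ s t, 1 ≤ s → s ≤ t → η t ≤ η s)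
    (θ : ℕ → EuclideanSpace ℝ (Fin d)) (g : ℕ → EuclideanSpace ℝ (Fin d) → EuclideanSpace ℝ (Fin d))
    (hupd : ∀ t, 1 ≤ t → θ (t + 1) = θ t - η t • g t (θ t))
    (T : ℕ) (hT : 1 ≤ T) :
    ‖(T : ℝ)⁻¹ • ∑ t ∈ Finset.Icc 1 T, g t (θ t)‖ ≤
      (2 / (η T * T)) * ((Finset.Icc 1 (T + 1)).sup' (Finset.nonempty_Icc.mpr (by omega))
        fun t => ‖θ t‖) := by
  set S : ℕ → EuclideanSpace ℝ (Fin d) :=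
    fun n => ∑ t ∈ Finset.Icc 1 n, (η t)⁻¹ • (θ t - θ (t + 1)) with hS
  -- key invariant
  have key : ∀ n, ∀ hn : 1 ≤ n, ‖S n + (η n)⁻¹ • θ (n + 1)‖ ≤
      (η n)⁻¹ * ((Finset.Icc 1 n).sup' (Finset.nonempty_Icc.mpr hn) fun t => ‖θ t‖) := by
    intro n hn
    induction n, hn using Nat.le_induction with
    | base =>
      have h1 : S 1 = (η 1)⁻¹ • (θ 1 - θ 2) := by simp [hS]
      have : S 1 + (η 1)⁻¹ • θ 2 = (η 1)⁻¹ • θ 1 := by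
        rw [h1, smul_sub]; abel
      rw [this, norm_smul, Real.norm_eq_abs,
        abs_of_nonneg (inv_nonneg.mpr (hη 1 le_rfl).le)]
      have : (Finset.Icc 1 1).sup' (Finset.nonempty_Icc.mpr le_rfl) (fun t => ‖θ t‖) = ‖θ 1‖ := by
        simp
      rw [this]
    | succ n hn ih =>
      have hne : (Finset.Icc 1 n).Nonempty := Finset.nonempty_Icc.mpr hn
      have hne' : (Finset.Icc 1 (n + 1)).Nonempty := Finset.nonempty_Icc.mpr (by omega)
      set M := (Finset.Icc 1 (n + 1)).sup' hne' fun t => ‖θ t‖ with hM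
      have hMn : (Finset.Icc 1 n).sup' hne (fun t => ‖θ t‖) ≤ M := by
        apply Finset.sup'_le
        intro t ht
        exact Finset.le_sup' (f := fun t => ‖θ t‖)
          (Finset.mem_Icc.mpr ⟨(Finset.mem_Icc.mp ht).1, by
            have := (Finset.mem_Icc.mp ht).2; omega⟩)
      have hθM : ‖θ (n + 1)‖ ≤ M :=
        Finset.le_sup' (f := fun t => ‖θ t‖) (Finset.mem_Icc.mpr ⟨by omega, le_rfl⟩)
      have hSsucc : S (n + 1) = S n + (η (n + 1))⁻¹ • (θ (n + 1) - θ (n + 2)) := by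
        rw [hS]; exact Finset.sum_Icc_succ_top (by omega) _
      have hA : S (n + 1) + (η (n + 1))⁻¹ • θ (n + 2)
          = (S n + (η n)⁻¹ • θ (n + 1)) + ((η (n + 1))⁻¹ - (η n)⁻¹) • θ (n + 1) := by
        rw [hSsucc, smul_sub, sub_smul]; abel
      have hηn := hη n hn
      have hηn1 := hη (n + 1) (by omega)
      have hmono : (η n)⁻¹ ≤ (η (n + 1))⁻¹ :=
        inv_anti₀ hηn1 (hη_anti n (n + 1) hn (by omega))
      calc ‖S (n + 1) + (η (n + 1))⁻¹ • θ (n + 2)‖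
          ≤ ‖S n + (η n)⁻¹ • θ (n + 1)‖ + ‖((η (n + 1))⁻¹ - (η n)⁻¹) • θ (n + 1)‖ := by
            rw [hA]; exact norm_add_le _ _
        _ ≤ (η n)⁻¹ * M + ((η (n + 1))⁻¹ - (η n)⁻¹) * M := by
            refine add_le_add ?_ ?_
            · exact le_trans ih (mul_le_mul_of_nonneg_left hMn (inv_nonneg.mpr hηn.le))
            · rw [norm_smul, Real.norm_eq_abs, abs_of_nonneg (by linarith)]
              exact mul_le_mul_of_nonneg_left hθM (by linarith)
        _ = (η (n + 1))⁻¹ * M := by ring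
  -- rewrite the sum of gradients as S T
  have hsum : ∑ t ∈ Finset.Icc 1 T, g t (θ t) = S T := by
    rw [hS]
    apply Finset.sum_congr rfl
    intro t ht
    have ht1 : 1 ≤ t := (Finset.mem_Icc.mp ht).1
    have hηt := hη t ht1
    rw [hupd t ht1]
    rw [sub_sub_cancel, smul_smul, inv_mul_cancel₀ hηt.ne', one_smul]
  have hne : (Finset.Icc 1 T).Nonempty := Finset.nonempty_Icc.mpr hT
  have hne' : (Finset.Icc 1 (T + 1)).Nonempty := Finset.nonempty_Icc.mpr (by omega)
  set M := (Finset.Icc 1 (T + 1)).sup' (Finset.nonempty_Icc.mpr (by omega)) fun t => ‖θ t‖ with hM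
  have hMn : (Finset.Icc 1 T).sup' hne (fun t => ‖θ t‖) ≤ M := by
    apply Finset.sup'_le
    intro t ht
    exact Finset.le_sup' (f := fun t => ‖θ t‖)
      (Finset.mem_Icc.mpr ⟨(Finset.mem_Icc.mp ht).1, by
        have := (Finset.mem_Icc.mp ht).2; omega⟩)
  have hθM : ‖θ (T + 1)‖ ≤ M :=
    Finset.le_sup' (f := fun t => ‖θ t‖) (Finset.mem_Icc.mpr ⟨by omega, le_rfl⟩)
  have hηT := hη T hT
  have hST : ‖S T‖ ≤ (η T)⁻¹ * (2 * M) := by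
    have h1 : ‖S T‖ ≤ ‖S T + (η T)⁻¹ • θ (T + 1)‖ + ‖(η T)⁻¹ • θ (T + 1)‖ := by
      have := norm_sub_le (S T + (η T)⁻¹ • θ (T + 1)) ((η T)⁻¹ • θ (T + 1))
      simpa using this
    have h2 := key T hT
    have h3 : ‖(η T)⁻¹ • θ (T + 1)‖ ≤ (η T)⁻¹ * M := by
      rw [norm_smul, Real.norm_eq_abs, abs_of_nonneg (inv_nonneg.mpr hηT.le)]
      exact mul_le_mul_of_nonneg_left hθM (inv_nonneg.mpr hηT.le)
    have h4 : (η T)⁻¹ * ((Finset.Icc 1 T).sup' hne fun t => ‖θ t‖) ≤ (η T)⁻¹ * M :=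
      mul_le_mul_of_nonneg_left hMn (inv_nonneg.mpr hηT.le)
    nlinarith [h2, h3, h4]
  rw [hsum, norm_smul, Real.norm_eq_abs, abs_of_nonneg (by positivity : (0:ℝ) ≤ (T:ℝ)⁻¹)]
  have hTpos : (0:ℝ) < T := by exact_mod_cast hT
  calc (T:ℝ)⁻¹ * ‖S T‖ ≤ (T:ℝ)⁻¹ * ((η T)⁻¹ * (2 * M)) :=
      mul_le_mul_of_nonneg_left hST (by positivity)
    _ = (2 / (η T * T)) * M := by rw [div_eq_mul_inv, mul_inv]; ring
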